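/- arXiv:1305.4952 — 2 statements merged into one kernel-verified Lean document; each statement's English description precedes it below -/
import Mathlib

section
/- A real symmetric n×n matrix is positive semidefinite if and only if all of its principal minors (determinants of submatrices formed by choosing the same subset of rows and columns, over all nonempty subsets of {1,...,n}) are nonnegative. -/
/-!
Principal submatrices of a positive semidefinite matrix are positive semidefinite, so their
determinants are nonnegative. Conversely, `det (1 + t • A)` is a polynomial in `t` whose `k`-th
coefficient is the sum of the `k × k` principal minors. If these are nonnegative, then
`det (1 + t • A) ≥ 1` for every `t ≥ 0`, whereas an eigenvalue `λ < 0` would make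
`1 + (-λ⁻¹) • A` singular.
-/

open Matrix Polynomial
open scoped ComplexOrder

theorem Polynomial.coeff_zero_le_eval_of_coeff_nonneg {R : Type*} [Semiring R] [PartialOrder R]
    [IsOrderedRing R] {p : R[X]} (hp : ∀ k, 0 ≤ p.coeff k) {t : R} (ht : 0 ≤ t) :
    p.coeff 0 ≤ p.eval t := by
  rw [eval_eq_sum_range]
  simpa using Finset.single_le_sum (fun k _ => mul_nonneg (hp k) (pow_nonneg ht k))
    (Finset.mem_range.mpr p.natDegree.succ_pos)

namespace Matrix

variable {n : Type*} [Fintype n] [DecidableEq n]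

theorem eval_det_one_add_X_smul {R : Type*} [CommRing R] (A : Matrix n n R) (t : R) :
    (det (1 + (X : R[X]) • A.map C)).eval t = det (1 + t • A) := by
  rw [← coe_evalRingHom, RingHom.map_det]
  congr 1
  ext i j
  simp [Matrix.one_apply, apply_ite, mul_comm t]

theorem one_le_det_one_add_smul_of_minors_nonneg {R : Type*} [CommRing R] [PartialOrder R]
    [IsOrderedRing R] (A : Matrix n n R)
    (hA : ∀ s : Finset n, 0 ≤ (A.submatrix ((↑) : s → n) (↑)).det) {t : R} (ht : 0 ≤ t) :
    1 ≤ det (1 + t • A) := by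
  have hcoeff : ∀ k, 0 ≤ (det (1 + (X : R[X]) • A.map C)).coeff k := fun k => by
    rw [coeff_det_one_add_X_smul_eq_sum_minors]
    exact Finset.sum_nonneg fun s _ => hA s
  have h0 : (det (1 + (X : R[X]) • A.map C)).coeff 0 = 1 := by
    rw [coeff_zero_eq_eval_zero, eval_det_one_add_X_smul, zero_smul, add_zero, det_one]
  rw [← eval_det_one_add_X_smul, ← h0]
  exact coeff_zero_le_eval_of_coeff_nonneg hcoeff ht

theorem IsHermitian.posSemidef_of_det_one_add_smul_ne_zero {𝕜 : Type*} [RCLike 𝕜]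
    {A : Matrix n n 𝕜} (hA : A.IsHermitian) (h : ∀ t : ℝ, 0 < t → det (1 + t • A) ≠ 0) :
    A.PosSemidef := by
  refine hA.posSemidef_iff_eigenvalues_nonneg.mpr fun i => ?_
  by_contra! hneg
  set v := ⇑(hA.eigenvectorBasis i)
  have hv : v ≠ 0 := fun hv0 =>
    hA.eigenvectorBasis.orthonormal.ne_zero i (by ext j; exact congrFun hv0 j)
  have hker : (1 + (-(hA.eigenvalues i)⁻¹) • A) *ᵥ v = 0 := by
    rw [add_mulVec, one_mulVec, smul_mulVec, hA.mulVec_eigenvectorBasis, smul_smul,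
      neg_mul, inv_mul_cancel₀ hneg.ne, neg_smul, one_smul, add_neg_cancel]
  exact h _ (by simpa using hneg) (exists_mulVec_eq_zero_iff.mp ⟨v, hv, hker⟩)

end Matrix

/-- A real symmetric `n × n` matrix is positive semidefinite iff all of its
principal minors (over all nonempty index subsets) are nonnegative. -/
theorem stmt_2 {n : ℕ} (A : Matrix (Fin n) (Fin n) ℝ) (hA : A.IsSymm) :
    A.PosSemidef ↔
      ∀ S : Finset (Fin n), S.Nonempty →
        0 ≤ (A.submatrix (Subtype.val : {i // i ∈ S} → Fin n)
              (Subtype.val : {i // i ∈ S} → Fin n)).det := by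
  refine ⟨fun hpsd S _ => (hpsd.submatrix Subtype.val).det_nonneg, fun hminors => ?_⟩
  have hall : ∀ S : Finset (Fin n), 0 ≤ (A.submatrix ((↑) : S → Fin n) (↑)).det := fun S =>
    S.eq_empty_or_nonempty.elim (fun hS => by subst hS; simp) (hminors S)
  refine (isHermitian_iff_isSymm.mpr hA).posSemidef_of_det_one_add_smul_ne_zero fun t ht => ?_
  exact (zero_lt_one.trans_le (one_le_det_one_add_smul_of_minors_nonneg A hall ht.le)).ne'
end

section
/- (Sauer's Lemma) If a family G of binary-valued functions on a set Q has VC-dimension at most d, then for every N ≥ d ≥ 1 its shatter coefficient satisfies S_G(N) ≤ Σ_{i=0}^{d} C(N,i) ≤ (eN/d)^d. -/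
/-- The set of labelings realized by the family `{g θ : θ ∈ Θ}` on the multisample `q`. -/
def labelings {Θ Q : Type*} (g : Θ → Q → Bool) (N : ℕ) (q : Fin N → Q) :
    Set (Fin N → Bool) :=
  {v | ∃ θ : Θ, v = fun i => g θ (q i)}

/-- The shatter coefficient (growth function) of the family `{g θ : θ ∈ Θ}`. -/
noncomputable def shatterCoeff {Θ Q : Type*} (g : Θ → Q → Bool) (N : ℕ) : ℕ :=
  ⨆ q : Fin N → Q, (labelings g N q).ncard

/-! View the labelings of a sample of size `N` as a family of subsets of `Fin N`. If this family
shattered a set of `k > d` positions, the `k`-point subsample would carry all `2^k` labelings; so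
its VC-dimension is at most `d`, and the Sauer–Shelah lemma bounds its size by `∑_{i ≤ d} C(N, i)`.
For `0 < x ≤ 1`, `x^d ∑_{i ≤ d} C(N, i) ≤ (1 + x)^N ≤ e^{N x}`, and `x = d / N` gives `(e N / d)^d`. -/

open Finset

lemma Finset.card_le_sum_choose_of_vcDim_le {α : Type*} [Fintype α] [DecidableEq α]
    {𝒜 : Finset (Finset α)} {d : ℕ} (h𝒜 : 𝒜.vcDim ≤ d) :
    #𝒜 ≤ ∑ i ∈ range (d + 1), (Fintype.card α).choose i :=
  calc #𝒜 ≤ #𝒜.shatterer := card_le_card_shatterer 𝒜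
    _ ≤ ∑ i ∈ Iic 𝒜.vcDim, (Fintype.card α).choose i := card_shatterer_le_sum_vcDim
    _ ≤ ∑ i ∈ range (d + 1), (Fintype.card α).choose i := by
      rw [Nat.range_succ_eq_Iic]
      exact sum_le_sum_of_subset (Iic_subset_Iic.mpr h𝒜)

section Trace

variable {Θ Q : Type*} (g : Θ → Q → Bool) {N : ℕ} (q : Fin N → Q)

lemma filter_eq_true_injective {ι : Type*} [Fintype ι] :
    Function.Injective fun v : ι → Bool => univ.filter (v · = true) := by
  intro v w h
  funext i
  simpa only [mem_filter, mem_univ, true_and, ← Bool.eq_iff_iff] using Finset.ext_iff.mp h i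

/-- Labelings encoded as subsets of the sample positions, so that `Finset.vcDim` applies. -/
noncomputable def traceFamily : Finset (Finset (Fin N)) :=
  (Set.toFinite (labelings g N q)).toFinset.image fun v => univ.filter (v · = true)

lemma mem_traceFamily {u : Finset (Fin N)} :
    u ∈ traceFamily g q ↔ ∃ θ, univ.filter (fun i => g θ (q i) = true) = u := by
  simp only [traceFamily, Set.Finite.mem_toFinset, mem_image, labelings, Set.mem_ofPred_eq]
  constructor
  · rintro ⟨v, ⟨θ, rfl⟩, rfl⟩
    exact ⟨θ, rfl⟩
  · rintro ⟨θ, rfl⟩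
    exact ⟨_, ⟨θ, rfl⟩, rfl⟩

lemma card_traceFamily : #(traceFamily g q) = (labelings g N q).ncard := by
  rw [traceFamily, card_image_of_injective _ filter_eq_true_injective,
    Set.ncard_eq_toFinset_card]

lemma labelings_comp_orderEmbOfFin_eq_univ {s : Finset (Fin N)}
    (hs : (traceFamily g q).Shatters s) :
    labelings g #s (q ∘ s.orderEmbOfFin rfl) = Set.univ := by
  set ι := s.orderEmbOfFin rfl
  refine Set.eq_univ_of_forall fun w => ?_
  have hts : (univ.filter (w · = true)).map ι.toEmbedding ⊆ s := by
    intro j hj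
    obtain ⟨i, -, rfl⟩ := mem_map.mp hj
    exact s.orderEmbOfFin_mem rfl i
  obtain ⟨u, hu, hsu⟩ := hs hts
  obtain ⟨θ, rfl⟩ := (mem_traceFamily g q).mp hu
  refine ⟨θ, funext fun i => Bool.eq_iff_iff.mpr ?_⟩
  have hi : ι i ∈ s := s.orderEmbOfFin_mem rfl i
  have := Finset.ext_iff.mp hsu (ι i)
  simp only [mem_inter, mem_filter, mem_univ, true_and, mem_map, RelEmbedding.coe_toEmbedding,
    ι.injective.eq_iff, exists_eq_right, hi] at this
  exact this.symm

lemma vcDim_traceFamily_le {d : ℕ}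
    (hVC : ∀ k : ℕ, d < k → ∀ q : Fin k → Q, (labelings g k q).ncard < 2 ^ k) :
    (traceFamily g q).vcDim ≤ d := by
  refine Finset.sup_le fun s hs => not_lt.mp fun hds => ?_
  have := hVC _ hds (q ∘ s.orderEmbOfFin rfl)
  rw [labelings_comp_orderEmbOfFin_eq_univ g q (mem_shatterer.mp hs), Set.ncard_univ,
    Nat.card_eq_fintype_card, Fintype.card_fun, Fintype.card_bool, Fintype.card_fin] at this
  exact lt_irrefl _ this

end Trace

lemma pow_mul_sum_range_choose_le_one_add_pow {x : ℝ} (hx0 : 0 ≤ x) (hx1 : x ≤ 1)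
    {d N : ℕ} (hdN : d ≤ N) :
    x ^ d * ∑ i ∈ range (d + 1), (N.choose i : ℝ) ≤ (1 + x) ^ N :=
  calc x ^ d * ∑ i ∈ range (d + 1), (N.choose i : ℝ)
      ≤ ∑ i ∈ range (d + 1), x ^ i * N.choose i := by
        rw [mul_sum]
        exact sum_le_sum fun i hi => mul_le_mul_of_nonneg_right (pow_le_pow_of_le_one hx0 hx1
          (Nat.lt_succ_iff.mp (mem_range.mp hi))) (Nat.cast_nonneg _)
    _ ≤ ∑ i ∈ range (N + 1), x ^ i * N.choose i :=
        sum_le_sum_of_subset_of_nonneg (range_subset_range.mpr (by omega))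
          fun i _ _ => by positivity
    _ = (1 + x) ^ N := by
        rw [add_comm 1 x, add_pow]
        simp

lemma sum_range_choose_le_exp_mul_div_pow {d N : ℕ} (hdN : d ≤ N) :
    ((∑ i ∈ range (d + 1), N.choose i : ℕ) : ℝ) ≤ (Real.exp 1 * N / d) ^ d := by
  rcases d.eq_zero_or_pos with rfl | hd
  · simp
  have hN : (0 : ℝ) < N := by exact_mod_cast hd.trans_le hdN
  set x : ℝ := d / N
  have hx : 0 < x := by positivity
  -- `x = d / N` minimizes the resulting bound `e^{N x} / x^d`.
  have key : x ^ d * ∑ i ∈ range (d + 1), (N.choose i : ℝ) ≤ Real.exp 1 ^ d :=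
    calc x ^ d * ∑ i ∈ range (d + 1), (N.choose i : ℝ) ≤ (1 + x) ^ N :=
          pow_mul_sum_range_choose_le_one_add_pow hx.le
            (div_le_one_of_le₀ (by exact_mod_cast hdN) hN.le) hdN
      _ ≤ Real.exp x ^ N := by
          gcongr
          linarith [Real.add_one_le_exp x]
      _ = Real.exp 1 ^ d := by
          rw [← Real.exp_nat_mul, mul_div_cancel₀ _ hN.ne', ← Real.exp_nat_mul, mul_one]
  calc ((∑ i ∈ range (d + 1), N.choose i : ℕ) : ℝ) ≤ Real.exp 1 ^ d / x ^ d := by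
        rw [le_div_iff₀ (by positivity), mul_comm]
        exact_mod_cast key
    _ = (Real.exp 1 * N / d) ^ d := by
        rw [← div_pow, div_div_eq_mul_div]

theorem stmt_12_general {Θ Q : Type*} (g : Θ → Q → Bool) (d N : ℕ) (hN : d ≤ N)
    (hVC : ∀ k : ℕ, d < k → ∀ q : Fin k → Q, (labelings g k q).ncard < 2 ^ k) :
    shatterCoeff g N ≤ ∑ i ∈ Finset.range (d + 1), N.choose i ∧
    ((∑ i ∈ Finset.range (d + 1), N.choose i : ℕ) : ℝ) ≤
      (Real.exp 1 * N / d) ^ d := by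
  refine ⟨ciSup_le' fun q => ?_, sum_range_choose_le_exp_mul_div_pow hN⟩
  rw [← card_traceFamily]
  simpa only [Fintype.card_fin] using card_le_sum_choose_of_vcDim_le (vcDim_traceFamily_le g q hVC)

/-- Sauer's lemma: if the VC-dimension of the family is at most `d` (no `k > d`
points are shattered), then for `N ≥ d ≥ 1`,
`S_G(N) ≤ ∑_{i=0}^{d} C(N,i) ≤ (eN/d)^d`. -/
theorem stmt_12 {Θ Q : Type*} (g : Θ → Q → Bool) (d N : ℕ) (hd : 1 ≤ d) (hN : d ≤ N)
    (hVC : ∀ k : ℕ, d < k → ∀ q : Fin k → Q, (labelings g k q).ncard < 2 ^ k) :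
    shatterCoeff g N ≤ ∑ i ∈ Finset.range (d + 1), N.choose i ∧
    ((∑ i ∈ Finset.range (d + 1), N.choose i : ℕ) : ℝ) ≤
      (Real.exp 1 * N / d) ^ d :=
  stmt_12_general g d N hN hVC
end
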